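/- arXiv:2605.14921 — 2 statements merged into one kernel-verified Lean document; each statement's English description precedes it below -/
import Mathlib

section
/- Let m, n be positive integers and let w be a binary word of type (m,n) regarded cyclically. Then at least one cyclic rotation of w is an (m,n)-Dyck word. -/
/-- Rotation of a word by `k` (moves the first `k` letters to the end). -/
def rotNat (N k : ℕ) (w : Fin N → Bool) : Fin N → Bool :=
  fun i => w ⟨(i.val + k) % N, Nat.mod_lt _ i.pos⟩

/-- A binary word of type `(m,n)`: length `m+n` with exactly `m` `true`s (up-steps). -/
def IsWord (m n : ℕ) (w : Fin (m + n) → Bool) : Prop :=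
  (Finset.univ.filter (fun i => w i = true)).card = m

instance (m n : ℕ) : DecidablePred (IsWord m n) := fun _ => by
  unfold IsWord; infer_instance

/-- Number of up-steps among the first `t` steps of the word `w`. -/
def ups (N : ℕ) (w : Fin N → Bool) (t : ℕ) : ℕ :=
  (Finset.univ.filter (fun i : Fin N => i.val < t ∧ w i = true)).card

/-- Number of right-steps among the first `t` steps of the word `w`. -/
def rights (N : ℕ) (w : Fin N → Bool) (t : ℕ) : ℕ :=
  (Finset.univ.filter (fun i : Fin N => i.val < t ∧ w i = false)).card

/-- An `(m,n)`-Dyck word: `m` up-steps (`true`) and `n` right-steps (`false`) such that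
every prefix with `i` ups and `j` rights satisfies `m * j ≤ n * i`
(the path stays weakly above the diagonal `m·x = n·y`). -/
def IsDyck (m n : ℕ) (w : Fin (m + n) → Bool) : Prop :=
  IsWord m n w ∧ ∀ t ≤ m + n, m * rights (m + n) w t ≤ n * ups (m + n) w t

instance (m n : ℕ) : DecidablePred (IsDyck m n) := fun _ => by
  unfold IsDyck; infer_instance

/-- The anchors of `w` away from the origin: the indices `1 ≤ t ≤ m+n` such that the vertex
`(j, i) = (rights w t, ups w t)` reached after `t` steps lies on the diagonal `m·x = n·y`. -/
def anchors (m n : ℕ) (w : Fin (m + n) → Bool) : Finset ℕ :=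
  (Finset.Icc 1 (m + n)).filter
    (fun t => m * rights (m + n) w t = n * ups (m + n) w t)


lemma ups_zero (N : ℕ) (w : Fin N → Bool) : ups N w 0 = 0 := by
  simp [ups]

lemma rights_zero (N : ℕ) (w : Fin N → Bool) : rights N w 0 = 0 := by
  simp [rights]

lemma ups_succ (N : ℕ) (w : Fin N → Bool) (t : ℕ) (ht : t < N) :
    ups N w (t + 1) = ups N w t + (if w ⟨t, ht⟩ then 1 else 0) := by
  unfold ups
  by_cases h : w ⟨t, ht⟩ = true
  · rw [if_pos h]
    have hset : (Finset.univ.filter fun i : Fin N => i.val < t + 1 ∧ w i = true)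
        = insert ⟨t, ht⟩ (Finset.univ.filter fun i : Fin N => i.val < t ∧ w i = true) := by
      ext i
      simp only [Finset.mem_insert, Finset.mem_filter, Finset.mem_univ, true_and]
      constructor
      · rintro ⟨h1, h2⟩
        rcases Nat.lt_succ_iff_lt_or_eq.mp h1 with h1 | h1
        · exact Or.inr ⟨h1, h2⟩
        · exact Or.inl (Fin.ext h1)
      · rintro (rfl | ⟨h1, h2⟩)
        · exact ⟨Nat.lt_succ_self t, h⟩
        · exact ⟨Nat.lt_succ_of_lt h1, h2⟩
    rw [hset, Finset.card_insert_of_notMem (by simp)]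
  · rw [if_neg (by simpa using h)]
    have hset : (Finset.univ.filter fun i : Fin N => i.val < t + 1 ∧ w i = true)
        = (Finset.univ.filter fun i : Fin N => i.val < t ∧ w i = true) := by
      ext i
      simp only [Finset.mem_filter, Finset.mem_univ, true_and]
      constructor
      · rintro ⟨h1, h2⟩
        rcases Nat.lt_succ_iff_lt_or_eq.mp h1 with h1 | h1
        · exact ⟨h1, h2⟩
        · have : i = (⟨t, ht⟩ : Fin N) := Fin.ext h1
          exact absurd (this ▸ h2) h
      · rintro ⟨h1, h2⟩
        exact ⟨Nat.lt_succ_of_lt h1, h2⟩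
    rw [hset]; omega

lemma rights_succ (N : ℕ) (w : Fin N → Bool) (t : ℕ) (ht : t < N) :
    rights N w (t + 1) = rights N w t + (if w ⟨t, ht⟩ then 0 else 1) := by
  unfold rights
  by_cases h : w ⟨t, ht⟩ = false
  · rw [if_neg (by simp [h])]
    have hset : (Finset.univ.filter fun i : Fin N => i.val < t + 1 ∧ w i = false)
        = insert ⟨t, ht⟩ (Finset.univ.filter fun i : Fin N => i.val < t ∧ w i = false) := by
      ext i
      simp only [Finset.mem_insert, Finset.mem_filter, Finset.mem_univ, true_and]
      constructor
      · rintro ⟨h1, h2⟩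
        rcases Nat.lt_succ_iff_lt_or_eq.mp h1 with h1 | h1
        · exact Or.inr ⟨h1, h2⟩
        · exact Or.inl (Fin.ext h1)
      · rintro (rfl | ⟨h1, h2⟩)
        · exact ⟨Nat.lt_succ_self t, h⟩
        · exact ⟨Nat.lt_succ_of_lt h1, h2⟩
    rw [hset, Finset.card_insert_of_notMem (by simp)]
  · rw [if_pos (by simpa using h)]
    have hset : (Finset.univ.filter fun i : Fin N => i.val < t + 1 ∧ w i = false)
        = (Finset.univ.filter fun i : Fin N => i.val < t ∧ w i = false) := by
      ext i
      simp only [Finset.mem_filter, Finset.mem_univ, true_and]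
      constructor
      · rintro ⟨h1, h2⟩
        rcases Nat.lt_succ_iff_lt_or_eq.mp h1 with h1 | h1
        · exact ⟨h1, h2⟩
        · have : i = (⟨t, ht⟩ : Fin N) := Fin.ext h1
          exact absurd (this ▸ h2) h
      · rintro ⟨h1, h2⟩
        exact ⟨Nat.lt_succ_of_lt h1, h2⟩
    rw [hset]; omega

lemma ups_N (N : ℕ) (w : Fin N → Bool) :
    ups N w N = (Finset.univ.filter fun i : Fin N => w i = true).card := by
  unfold ups
  congr 1
  ext i
  simp [i.isLt]

lemma ups_add_rights (N : ℕ) (w : Fin N → Bool) (t : ℕ) (ht : t ≤ N) :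
    ups N w t + rights N w t = t := by
  induction t with
  | zero => simp [ups, rights]
  | succ s ih =>
    have hs : s < N := ht
    rw [ups_succ N w s hs, rights_succ N w s hs]
    have := ih (le_of_lt hs)
    by_cases h : w ⟨s, hs⟩ <;> simp [h] <;> omega

/-- Height of the lattice path after `t` steps. -/
def hgt (m n N : ℕ) (w : Fin N → Bool) (t : ℕ) : ℤ :=
  (n : ℤ) * ups N w t - (m : ℤ) * rights N w t

lemma hgt_zero (m n N : ℕ) (w : Fin N → Bool) : hgt m n N w 0 = 0 := by
  simp [hgt, ups_zero, rights_zero]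

lemma hgt_succ (m n N : ℕ) (w : Fin N → Bool) (t : ℕ) (ht : t < N) :
    hgt m n N w (t + 1) = hgt m n N w t + (if w ⟨t, ht⟩ then (n : ℤ) else -(m : ℤ)) := by
  unfold hgt
  rw [ups_succ N w t ht, rights_succ N w t ht]
  by_cases h : w ⟨t, ht⟩ <;> simp [h] <;> ring

lemma hgt_top (m n : ℕ) (w : Fin (m + n) → Bool) (hw : IsWord m n w) :
    hgt m n (m + n) w (m + n) = 0 := by
  have h1 : ups (m + n) w (m + n) = m := by rw [ups_N]; exact hw
  have h2 : rights (m + n) w (m + n) = n := by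
    have := ups_add_rights (m + n) w (m + n) le_rfl
    omega
  simp [hgt, h1, h2, mul_comm]

lemma isWord_rot (m n k : ℕ) (hk : k < m + n) (w : Fin (m + n) → Bool)
    (hw : IsWord m n w) : IsWord m n (rotNat (m + n) k w) := by
  haveI : NeZero (m + n) := ⟨by omega⟩
  set c : Fin (m + n) := ⟨k, hk⟩ with hc
  have hrot : ∀ i : Fin (m + n), rotNat (m + n) k w i = w (i + c) := fun i => rfl
  unfold IsWord
  calc (Finset.univ.filter fun i => rotNat (m + n) k w i = true).card
      = (Finset.univ.filter fun i : Fin (m + n) => w (i + c) = true).card := rfl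
    _ = ((Finset.univ.filter fun i : Fin (m + n) => w i = true).map
          (Equiv.subRight c).toEmbedding).card := by
        congr 1
        ext i
        simp [Finset.mem_map_equiv]
    _ = m := by rw [Finset.card_map]; exact hw


/-- Every binary word of type `(m,n)`, regarded cyclically, has at least one cyclic
rotation which is an `(m,n)`-Dyck word. -/
theorem exists_dyck_rotation (m n : ℕ) (hm : 0 < m) (hn : 0 < n)
    (w : Fin (m + n) → Bool) (hw : IsWord m n w) :
    ∃ k : Fin (m + n), IsDyck m n (rotNat (m + n) k.val w) := by
  have hN : 0 < m + n := by omega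
  obtain ⟨k, hkmem, hkmin⟩ := Finset.exists_min_image (Finset.range (m + n))
    (fun t => hgt m n (m + n) w t) ⟨0, Finset.mem_range.mpr hN⟩
  have hk : k < m + n := Finset.mem_range.mp hkmem
  have hmin : ∀ j ≤ m + n, hgt m n (m + n) w k ≤ hgt m n (m + n) w j := by
    intro j hj
    rcases Nat.lt_or_ge j (m + n) with h | h
    · exact hkmin j (Finset.mem_range.mpr h)
    · have hj' : j = m + n := le_antisymm hj h
      rw [hj', hgt_top m n w hw, ← hgt_zero m n (m + n) w]
      exact hkmin 0 (Finset.mem_range.mpr hN)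
  refine ⟨⟨k, hk⟩, isWord_rot m n k hk w hw, ?_⟩
  set w' := rotNat (m + n) k w with hw'def
  have key : ∀ t ≤ m + n, hgt m n (m + n) w' t =
      (if k + t ≤ m + n then hgt m n (m + n) w (k + t)
        else hgt m n (m + n) w (k + t - (m + n))) - hgt m n (m + n) w k := by
    intro t ht
    induction t with
    | zero => simp [hgt_zero, Nat.le_of_lt hk]
    | succ s ih =>
      have hs : s < m + n := ht
      have ihs := ih (le_of_lt hs)
      have hassoc : k + (s + 1) = k + s + 1 := by omega
      rw [hgt_succ m n (m + n) w' s hs, ihs, hassoc]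
      have hrot : w' ⟨s, hs⟩ = w ⟨(s + k) % (m + n), Nat.mod_lt _ hN⟩ := rfl
      rcases Nat.lt_or_ge (k + s) (m + n) with h1 | h1
      · have hmod : (s + k) % (m + n) = k + s := by
          rw [Nat.mod_eq_of_lt (by omega)]; omega
        have hws : w' ⟨s, hs⟩ = w ⟨k + s, h1⟩ := by
          rw [hrot]; congr 1; exact Fin.ext hmod
        rw [hws, if_pos (show k + s ≤ m + n from le_of_lt h1),
          if_pos (show k + s + 1 ≤ m + n from h1),
          hgt_succ m n (m + n) w (k + s) h1]
        ring
      · have hmod : (s + k) % (m + n) = k + s - (m + n) := by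
          rw [Nat.mod_eq_sub_mod (by omega), Nat.mod_eq_of_lt (by omega)]
          omega
        have hlt : k + s - (m + n) < m + n := by omega
        have hws : w' ⟨s, hs⟩ = w ⟨k + s - (m + n), hlt⟩ := by
          rw [hrot]; congr 1; exact Fin.ext hmod
        rw [hws]
        rcases Nat.eq_or_lt_of_le h1 with h2 | h2
        · -- k + s = m + n exactly
          rw [if_pos (show k + s ≤ m + n from le_of_eq h2.symm),
            if_neg (show ¬ (k + s + 1 ≤ m + n) by omega)]
          have e1 : hgt m n (m + n) w (k + s) = 0 := by
            rw [← h2]; exact hgt_top m n w hw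
          have e2 : k + s + 1 - (m + n) = 1 := by omega
          have e3 : hgt m n (m + n) w 1 =
              (if w ⟨0, hN⟩ then (n : ℤ) else -(m : ℤ)) := by
            have := hgt_succ m n (m + n) w 0 hN
            rw [hgt_zero] at this
            simpa using this
          have e4 : (⟨k + s - (m + n), hlt⟩ : Fin (m + n)) = ⟨0, hN⟩ :=
            Fin.ext (show k + s - (m + n) = 0 by omega)
          rw [e1, e2, e3, e4]
          ring
        · rw [if_neg (show ¬ (k + s ≤ m + n) by omega),
            if_neg (show ¬ (k + s + 1 ≤ m + n) by omega)]
          have e2 : k + s + 1 - (m + n) = (k + s - (m + n)) + 1 := by omega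
          rw [e2, hgt_succ m n (m + n) w (k + s - (m + n)) hlt]
          ring
  intro t ht
  have hkey := key t ht
  have hnn : 0 ≤ hgt m n (m + n) w' t := by
    rw [hkey]
    rcases le_or_gt (k + t) (m + n) with h | h
    · have := hmin (k + t) h
      simp only [if_pos h]
      omega
    · have := hmin (k + t - (m + n)) (by omega)
      simp only [if_neg (not_le.mpr h)]
      omega
  unfold hgt at hnn
  have hcast : (m : ℤ) * rights (m + n) w' t ≤ (n : ℤ) * ups (m + n) w' t := by omega
  exact_mod_cast hcast
end

section
/- Let m, n be positive integers with g = gcd(m,n). The number of marked binary necklaces of type (m,n) — i.e., pairs of a necklace together with one of its w_N(ω) = g/r(ω) distinguishable blocks — equals (g/(m+n)) * C(m+n, n). -/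
/-- Order of the rotation stabilizer of a word. -/
def stabCard (N : ℕ) (w : Fin N → Bool) : ℕ :=
  (Finset.univ.filter (fun k : Fin N => rotNat N k.val w = w)).card

/-- The rotation orbit of a word, as a finite set. -/
def orbit (N : ℕ) (w : Fin N → Bool) : Finset (Fin N → Bool) :=
  Finset.univ.filter (fun w' => ∃ k : Fin N, rotNat N k.val w = w')

lemma rot_rot (N a b : ℕ) (w : Fin N → Bool) :
    rotNat N a (rotNat N b w) = fun i : Fin N => w ⟨(i.val + a + b) % N, Nat.mod_lt _ i.pos⟩ := by
  funext i
  simp only [rotNat]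
  congr 1
  exact Fin.ext (Nat.mod_add_mod _ _ _)

lemma rot_zero (N : ℕ) (w : Fin N → Bool) : rotNat N 0 w = w := by
  funext i
  simp only [rotNat]
  congr 1
  exact Fin.ext (by simp [Nat.mod_eq_of_lt i.isLt])

/-- Two words are rotation-equivalent if one is a rotation of the other. -/
def rotRel (N : ℕ) (w₁ w₂ : Fin N → Bool) : Prop :=
  ∃ k : Fin (N + 1), rotNat N k.val w₁ = w₂

instance (N : ℕ) : DecidableRel (rotRel N) := fun _ _ => by
  unfold rotRel; infer_instance

lemma rot_full (N : ℕ) (w : Fin N → Bool) : rotNat N N w = w := by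
  funext i
  simp only [rotNat]
  congr 1
  exact Fin.ext (by simp [Nat.add_mod_right, Nat.mod_eq_of_lt i.isLt])

lemma rotRel_refl (N : ℕ) (w : Fin N → Bool) : rotRel N w w :=
  ⟨⟨0, Nat.succ_pos N⟩, rot_zero N w⟩

lemma rotRel_symm (N : ℕ) {w₁ w₂ : Fin N → Bool} (h : rotRel N w₁ w₂) : rotRel N w₂ w₁ := by
  obtain ⟨k, hk⟩ := h
  refine ⟨⟨N - k.val, by omega⟩, ?_⟩
  subst hk
  rw [rot_rot]
  funext i
  have : (i.val + (N - k.val) + k.val) = i.val + N := by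
    have := k.isLt; omega
  rw [this]
  congr 1
  exact Fin.ext (by simp [Nat.add_mod_right, Nat.mod_eq_of_lt i.isLt])

lemma rotRel_trans (N : ℕ) {w₁ w₂ w₃ : Fin N → Bool}
    (h₁ : rotRel N w₁ w₂) (h₂ : rotRel N w₂ w₃) : rotRel N w₁ w₃ := by
  obtain ⟨k, hk⟩ := h₁
  obtain ⟨l, hl⟩ := h₂
  subst hk; subst hl
  rcases Nat.eq_zero_or_pos N with hN | hN
  · exact ⟨⟨0, Nat.succ_pos N⟩, funext fun i => absurd i.pos (by omega)⟩
  · refine ⟨⟨(l.val + k.val) % N, by have := Nat.mod_lt (l.val + k.val) hN; omega⟩, ?_⟩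
    rw [rot_rot]
    funext i
    simp only [rotNat]
    congr 1
    refine Fin.ext ?_
    show (i.val + (l.val + k.val) % N) % N = (i.val + l.val + k.val) % N
    rw [Nat.add_mod_mod]; congr 1; omega

/-- Rotation-equivalence as a setoid on words of type `(m,n)`. -/
def wordSetoid (m n : ℕ) : Setoid {w : Fin (m + n) → Bool // IsWord m n w} where
  r w₁ w₂ := rotRel (m + n) w₁.val w₂.val
  iseqv := ⟨fun w => rotRel_refl _ w.val, rotRel_symm _, rotRel_trans _⟩

instance (m n : ℕ) : DecidableRel (wordSetoid m n).r := fun w₁ w₂ =>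
  decidable_of_iff (rotRel (m + n) w₁.val w₂.val) Iff.rfl

instance (m n : ℕ) : DecidableEq (Quotient (wordSetoid m n)) := fun ω₁ ω₂ =>
  Quotient.recOnSubsingleton₂ ω₁ ω₂ fun w₁ w₂ =>
    decidable_of_iff (rotRel (m + n) w₁.val w₂.val) (Quotient.eq (r := wordSetoid m n)).symm

/-- A binary necklace of type `(m,n)` : a rotation orbit of words of type `(m,n)`. -/
def Necklace (m n : ℕ) : Type :=
  Quotient (wordSetoid m n)

instance (m n : ℕ) : Fintype (Necklace m n) :=
  @Quotient.fintype _ _ (wordSetoid m n)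
    (fun w₁ w₂ => decidable_of_iff (rotRel (m + n) w₁.val w₂.val) Iff.rfl)

/-!
Rotation is an action of the cyclic group `Fin N` (with `N = m + n`) on words, and a necklace `ω`
is an orbit of `N / r(ω)` words, so `∑ ω, N / r(ω)` counts all `C(m+n, m)` words. The positions
carrying a given letter are invariant under the stabilizer `H` of a word, hence a union of cosets
of `H`; so `r(ω) = |H|` divides both `m` and `n`, hence `g`. The quotients `g / r(ω)` are therefore
exact and equal `(g / N) · (N / r(ω))`, and summing gives the claim.
-/

open Finset AddAction

theorem AddSubgroup.card_dvd_card_of_add_mem {G : Type*} [AddGroup G] (H : AddSubgroup G)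
    (S : Set G) (hS : ∀ x ∈ S, ∀ h ∈ H, x + h ∈ S) : Nat.card H ∣ Nat.card S := by
  have hS_preimage : S = QuotientAddGroup.mk ⁻¹' (QuotientAddGroup.mk '' S : Set (G ⧸ H)) := by
    refine (Set.subset_preimage_image _ _).antisymm ?_
    rintro y ⟨x, hx, hxy⟩
    simpa using hS x hx _ (QuotientAddGroup.eq.mp hxy)
  rw [hS_preimage, Nat.card_congr (QuotientAddGroup.preimageMkEquivAddSubgroupProdSet H _),
    Nat.card_prod]
  exact dvd_mul_right _ _

theorem Nat.cast_div_eq_div_mul_cast_div {K : Type*} [Field K] [CharZero K] {r g N : ℕ}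
    (hN : N ≠ 0) (hrg : r ∣ g) (hgN : g ∣ N) :
    ((g / r : ℕ) : K) = g / N * ((N / r : ℕ) : K) := by
  rcases eq_or_ne r 0 with rfl | hr
  · simp
  rw [Nat.cast_div hrg (by exact_mod_cast hr), Nat.cast_div (hrg.trans hgN) (by exact_mod_cast hr)]
  field_simp

def boolFunEquivFinset (α : Type*) [Fintype α] [DecidableEq α] : (α → Bool) ≃ Finset α where
  toFun w := {i | w i = true}
  invFun s i := decide (i ∈ s)
  left_inv w := by funext i; simp
  right_inv s := by ext; simp

instance rotationAction (N : ℕ) [NeZero N] : AddAction (Fin N) (Fin N → Bool) where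
  vadd k w i := w (i + k)
  zero_vadd w := funext fun i => congrArg w (add_zero i)
  add_vadd a b w := funext fun i => congrArg w (add_assoc i a b).symm

section Rotation

variable {N : ℕ} [NeZero N]

theorem rotNat_eq_vadd (k : ℕ) (w : Fin N → Bool) : rotNat N k w = Fin.ofNat N k +ᵥ w := by
  funext i
  refine congrArg w (Fin.ext ?_)
  simp [Fin.val_add, Nat.add_mod_mod]

theorem rotRel_iff_mem_orbit (w₁ w₂ : Fin N → Bool) :
    rotRel N w₁ w₂ ↔ w₂ ∈ orbit (Fin N) w₁ := by
  constructor
  · rintro ⟨k, rfl⟩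
    exact ⟨Fin.ofNat N k, (rotNat_eq_vadd _ _).symm⟩
  · rintro ⟨k, rfl⟩
    exact ⟨⟨k.val, by omega⟩, by simp [rotNat_eq_vadd]⟩

theorem card_letter_vadd (k : Fin N) (w : Fin N → Bool) (b : Bool) :
    #{i | (k +ᵥ w) i = b} = #{i | w i = b} := by
  simp only [← Fintype.card_subtype]
  exact Fintype.card_congr ((Equiv.addRight k).subtypeEquiv fun i => Iff.rfl)

theorem stabCard_eq_card_stabilizer (w : Fin N → Bool) :
    stabCard N w = Nat.card (stabilizer (Fin N) w) := by
  classical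
  simp [stabCard, rotNat_eq_vadd, Nat.card_eq_fintype_card, Fintype.card_subtype]

theorem card_orbit_eq_div_stabCard (w : Fin N → Bool) :
    Nat.card (orbit (Fin N) w) = N / stabCard N w := by
  have h := (stabilizer (Fin N) w).card_mul_index
  rw [index_stabilizer, ← Nat.card_coe_set_eq, Nat.card_fin] at h
  rw [stabCard_eq_card_stabilizer]
  exact Nat.eq_div_of_mul_eq_right Nat.card_pos.ne' h

theorem card_stabilizer_dvd_card_letter (w : Fin N → Bool) (b : Bool) :
    Nat.card (stabilizer (Fin N) w) ∣ #{i | w i = b} := by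
  have := (stabilizer (Fin N) w).card_dvd_card_of_add_mem {i | w i = b} fun i hi k hk => by
    rwa [← (mem_stabilizer_iff.mp hk : k +ᵥ w = w)] at hi
  simpa [Nat.card_eq_fintype_card, Fintype.card_subtype] using this

end Rotation

theorem card_isWord (m n : ℕ) : Nat.card {w // IsWord m n w} = (m + n).choose m := by
  rw [Nat.card_congr ((boolFunEquivFinset (Fin (m + n))).subtypeEquiv (p := IsWord m n)
    (q := fun s => s.card = m) fun w => Iff.rfl),
    Nat.card_eq_fintype_card, Fintype.card_finset_len, Fintype.card_fin]

theorem isWord_vadd {m n : ℕ} [NeZero (m + n)] (k : Fin (m + n)) {w : Fin (m + n) → Bool}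
    (hw : IsWord m n w) : IsWord m n (k +ᵥ w) :=
  (card_letter_vadd k w true).trans hw

theorem stabCard_dvd_gcd {m n : ℕ} [NeZero (m + n)] {w : Fin (m + n) → Bool}
    (hw : IsWord m n w) : stabCard (m + n) w ∣ Nat.gcd m n := by
  rw [IsWord] at hw
  have hfalse : #{i | w i = false} = n := by
    have := card_filter_add_card_filter_not (s := univ) (fun i => w i = true)
    simp only [Bool.not_eq_true, card_univ, Fintype.card_fin] at this
    omega
  rw [stabCard_eq_card_stabilizer]
  refine Nat.dvd_gcd ?_ ?_
  · simpa only [hw] using card_stabilizer_dvd_card_letter w true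
  · simpa only [hfalse] using card_stabilizer_dvd_card_letter w false

theorem card_fiber_mk_eq_card_orbit {m n : ℕ} [NeZero (m + n)] (w : {w // IsWord m n w}) :
    Nat.card {w' // Quotient.mk (wordSetoid m n) w' = Quotient.mk _ w}
      = Nat.card (orbit (Fin (m + n)) w.val) :=
  Nat.card_congr
    { toFun w' := ⟨w'.1.1, (rotRel_iff_mem_orbit _ _).mp (rotRel_symm _ (Quotient.exact w'.2))⟩
      invFun v := ⟨⟨v.1, by obtain ⟨k, hk⟩ := v.2; exact hk ▸ isWord_vadd k w.2⟩,
        Quotient.sound (rotRel_symm _ ((rotRel_iff_mem_orbit _ _).mpr v.2))⟩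
      left_inv _ := rfl
      right_inv _ := rfl }

theorem card_isWord_eq_sum_card_fiber (m n : ℕ) :
    Nat.card {w // IsWord m n w}
      = ∑ ω : Necklace m n, Nat.card {w // Quotient.mk (wordSetoid m n) w = ω} := by
  rw [← Nat.card_congr (Equiv.sigmaFiberEquiv (Quotient.mk (wordSetoid m n))), Nat.card_sigma]
  rfl

theorem marked_necklace_count_general (m n : ℕ) (hm : 0 < m)
    (r : Necklace m n → ℕ)
    (hr : ∀ w : {w : Fin (m + n) → Bool // IsWord m n w},
      r (Quotient.mk (wordSetoid m n) w) = stabCard (m + n) w.val) :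
    ((∑ ω : Necklace m n, Nat.gcd m n / r ω : ℕ) : ℚ)
      = (Nat.gcd m n : ℚ) / (m + n) * Nat.choose (m + n) n := by
  have hN : m + n ≠ 0 := by omega
  have : NeZero (m + n) := ⟨hN⟩
  have hr_dvd : ∀ ω, r ω ∣ Nat.gcd m n :=
    Quotient.ind fun w => (hr w).symm ▸ stabCard_dvd_gcd w.2
  have hgcd_dvd : Nat.gcd m n ∣ m + n := dvd_add (Nat.gcd_dvd_left m n) (Nat.gcd_dvd_right m n)
  have hfiber : ∀ ω : Necklace m n,
      Nat.card {w // Quotient.mk (wordSetoid m n) w = ω} = (m + n) / r ω :=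
    Quotient.ind fun w => by rw [hr, card_fiber_mk_eq_card_orbit, card_orbit_eq_div_stabCard]
  calc ((∑ ω : Necklace m n, Nat.gcd m n / r ω : ℕ) : ℚ)
      = (Nat.gcd m n : ℚ) / (m + n) * ((∑ ω : Necklace m n, (m + n) / r ω : ℕ) : ℚ) := by
        push_cast [Finset.mul_sum, Nat.cast_div_eq_div_mul_cast_div hN (hr_dvd _) hgcd_dvd]
        rfl
    _ = (Nat.gcd m n : ℚ) / (m + n) * Nat.choose (m + n) n := by
        simp only [← hfiber, ← card_isWord_eq_sum_card_fiber, card_isWord]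
        rw [Nat.choose_symm_add]

/-- Theorem 3: the number of marked binary necklaces of type `(m,n)` — pairs of a
necklace `ω` together with one of its `g/r(ω)` distinguishable blocks, where
`g = gcd(m,n)` — equals `(g/(m+n)) * C(m+n, n)`. -/
theorem marked_necklace_count (m n : ℕ) (hm : 0 < m) (hn : 0 < n)
    (r : Necklace m n → ℕ)
    (hr : ∀ w : {w : Fin (m + n) → Bool // IsWord m n w},
      r (Quotient.mk (wordSetoid m n) w) = stabCard (m + n) w.val) :
    ((∑ ω : Necklace m n, Nat.gcd m n / r ω : ℕ) : ℚ)
      = (Nat.gcd m n : ℚ) / (m + n) * Nat.choose (m + n) n :=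
  marked_necklace_count_general m n hm r hr
end
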